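/- arXiv:1309.3920 — 2 statements merged into one kernel-verified Lean document; each statement's English description precedes it below -/
import Mathlib

section
/- As formal power series in q, d[1] = [3] + (1/2)[2] - [2,1], where d = q·d/dq. -/
/-- The multiple divisor sum `σ_{r_1,...,r_l}(n)`. -/
def msigma {l : ℕ} (r : Fin l → ℕ) (n : ℕ) : ℕ :=
  ∑ f ∈ (Fintype.piFinset fun _ : Fin l =>
      Finset.range (n + 1) ×ˢ Finset.range (n + 1)).filter
      (fun f => (∑ i, (f i).1 * (f i).2) = n ∧ (∀ i, 0 < (f i).1) ∧
        (∀ i, 0 < (f i).2) ∧ ∀ i j : Fin l, i < j → (f j).1 < (f i).1),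
    ∏ i, (f i).2 ^ r i

/-- The bracket `[s_1,...,s_l] ∈ ℚ[[q]]`, the generating series of the multiple
divisor sum `σ_{s_1-1,...,s_l-1}` divided by `(s_1-1)! ⋯ (s_l-1)!`. -/
noncomputable def bracket {l : ℕ} (s : Fin l → ℕ) : PowerSeries ℚ :=
  PowerSeries.mk fun n =>
    (msigma (fun i => s i - 1) n : ℚ) / ∏ i, ((s i - 1).factorial : ℚ)

/-- The derivation `d = q·d/dq` on formal power series: `Σ aₙ qⁿ ↦ Σ n aₙ qⁿ`. -/
noncomputable def qd (f : PowerSeries ℚ) : PowerSeries ℚ :=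
  PowerSeries.mk fun n => (n : ℚ) * PowerSeries.coeff n f

open Finset

def QdA (n : ℕ) : Finset (ℕ × ℕ) :=
  (range (n+1) ×ˢ range (n+1)).filter fun p => p.1 * p.2 = n ∧ 0 < p.1 ∧ 0 < p.2

def QdQ (n : ℕ) : Finset ((ℕ × ℕ) × (ℕ × ℕ)) :=
  ((range (n+1) ×ˢ range (n+1)) ×ˢ (range (n+1) ×ˢ range (n+1))).filter
    fun q => q.1.1 * q.1.2 + q.2.1 * q.2.2 = n ∧
      0 < q.1.1 ∧ 0 < q.1.2 ∧ 0 < q.2.1 ∧ 0 < q.2.2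

lemma mem_QdA {n : ℕ} {p : ℕ × ℕ} :
    p ∈ QdA n ↔ p.1 * p.2 = n ∧ 0 < p.1 ∧ 0 < p.2 := by
  constructor
  · intro h; exact (mem_filter.mp h).2
  · rintro ⟨h, h1, h2⟩
    refine mem_filter.mpr ⟨mem_product.mpr ⟨mem_range.mpr ?_, mem_range.mpr ?_⟩, h, h1, h2⟩
    · have := Nat.le_mul_of_pos_right p.1 h2; omega
    · have := Nat.le_mul_of_pos_left p.2 h1; omega

lemma mem_QdQ {n : ℕ} {q : (ℕ × ℕ) × (ℕ × ℕ)} :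
    q ∈ QdQ n ↔ q.1.1 * q.1.2 + q.2.1 * q.2.2 = n ∧
      0 < q.1.1 ∧ 0 < q.1.2 ∧ 0 < q.2.1 ∧ 0 < q.2.2 := by
  constructor
  · intro h; exact (mem_filter.mp h).2
  · rintro ⟨h, h1, h2, h3, h4⟩
    have a1 := Nat.le_mul_of_pos_right q.1.1 h2
    have a2 := Nat.le_mul_of_pos_left q.1.2 h1
    have a3 := Nat.le_mul_of_pos_right q.2.1 h4
    have a4 := Nat.le_mul_of_pos_left q.2.2 h3
    refine mem_filter.mpr ⟨mem_product.mpr ⟨mem_product.mpr ⟨?_, ?_⟩, mem_product.mpr ⟨?_, ?_⟩⟩,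
      h, h1, h2, h3, h4⟩ <;> exact mem_range.mpr (by omega)

lemma msigma_one (r n : ℕ) : msigma ![r] n = ∑ p ∈ QdA n, p.2 ^ r := by
  unfold msigma
  apply Finset.sum_nbij' (i := fun f => f 0) (j := fun p => fun _ => p)
  · intro f hf
    obtain ⟨hmem, hs, h1, h2, _⟩ := mem_filter.mp hf
    rw [Fin.sum_univ_one] at hs
    exact mem_QdA.mpr ⟨hs, h1 0, h2 0⟩
  · intro p hp
    obtain ⟨hs, h1, h2⟩ := mem_QdA.mp hp
    refine mem_filter.mpr ⟨Fintype.mem_piFinset.mpr fun i => ?_, ?_, fun _ => h1, fun _ => h2,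
      fun i j hij => ?_⟩
    · have := mem_filter.mp hp; exact this.1
    · rw [Fin.sum_univ_one]; exact hs
    · rw [Subsingleton.elim i j] at hij; exact absurd hij (lt_irrefl _)
  · intro f _; funext i; rw [Subsingleton.elim i 0]
  · intro p _; rfl
  · intro f _; rw [Fin.prod_univ_one]; rfl

lemma msigma_two (r1 r2 n : ℕ) :
    msigma ![r1, r2] n =
      ∑ q ∈ (QdQ n).filter (fun q => q.2.1 < q.1.1), q.1.2 ^ r1 * q.2.2 ^ r2 := by
  unfold msigma
  apply Finset.sum_nbij' (i := fun f => (f 0, f 1)) (j := fun q => ![q.1, q.2])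
  · intro f hf
    obtain ⟨hmem, hs, h1, h2, h3⟩ := mem_filter.mp hf
    rw [Fin.sum_univ_two] at hs
    exact mem_filter.mpr ⟨mem_QdQ.mpr ⟨hs, h1 0, h2 0, h1 1, h2 1⟩,
      h3 0 1 (by norm_num)⟩
  · intro q hq
    obtain ⟨hq', hlt⟩ := mem_filter.mp hq
    obtain ⟨hs, h1, h2, h3, h4⟩ := mem_QdQ.mp hq'
    have hm := mem_filter.mp (mem_filter.mp hq).1
    have hr : (q.1 ∈ range (n+1) ×ˢ range (n+1)) ∧ q.2 ∈ range (n+1) ×ˢ range (n+1) :=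
      mem_product.mp hm.1
    refine mem_filter.mpr ⟨Fintype.mem_piFinset.mpr fun i => ?_, ?_, fun i => ?_, fun i => ?_,
      fun i j hij => ?_⟩
    · fin_cases i
      · simpa using hr.1
      · simpa using hr.2
    · rw [Fin.sum_univ_two]; simpa using hs
    · fin_cases i
      · simpa using h1
      · simpa using h3
    · fin_cases i
      · simpa using h2
      · simpa using h4
    · fin_cases i <;> fin_cases j <;> simp_all
  · intro f _; funext i; fin_cases i <;> rfl
  · intro q _; rfl
  · intro f _; rw [Fin.prod_univ_two]; rfl

-- trichotomy split of a sum over QdQ according to comparison of a coordinate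
lemma split_sum (n : ℕ) (g : (ℕ × ℕ) × (ℕ × ℕ) → ℕ) (c : (ℕ × ℕ) × (ℕ × ℕ) → ℕ × ℕ) :
    ∑ q ∈ QdQ n, g q =
      (∑ q ∈ (QdQ n).filter (fun q => (c q).1 < (c q).2), g q) +
      (∑ q ∈ (QdQ n).filter (fun q => (c q).1 = (c q).2), g q) +
      (∑ q ∈ (QdQ n).filter (fun q => (c q).2 < (c q).1), g q) := by
  rw [← Finset.sum_filter_add_sum_filter_not (QdQ n) (fun q => (c q).1 < (c q).2) g]
  rw [← Finset.sum_filter_add_sum_filter_not ((QdQ n).filter (fun q => ¬ (c q).1 < (c q).2))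
    (fun q => (c q).1 = (c q).2) g]
  rw [Finset.filter_filter, Finset.filter_filter]
  rw [add_assoc]
  congr 2
  · apply Finset.sum_congr ?_ (fun _ _ => rfl)
    apply Finset.filter_congr; intro q _; constructor
    · rintro ⟨_, h⟩; exact h
    · intro h; omega
  · apply Finset.sum_congr ?_ (fun _ _ => rfl)
    apply Finset.filter_congr; intro q _; constructor
    · rintro ⟨h1, h2⟩; omega
    · intro h; omega

lemma bij_T (n : ℕ) :
    ∑ q ∈ (QdQ n).filter (fun q => q.2.1 < q.1.1), q.1.2 =
    ∑ q ∈ (QdQ n).filter (fun q => q.1.2 < q.2.2), q.1.2 := by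
  apply Finset.sum_nbij'
    (i := fun q => ((q.1.1 - q.2.1, q.1.2), (q.2.1, q.1.2 + q.2.2)))
    (j := fun q => ((q.1.1 + q.2.1, q.1.2), (q.2.1, q.2.2 - q.1.2)))
  · rintro ⟨⟨u1, v1⟩, u2, v2⟩ hq
    obtain ⟨hq', hlt⟩ := mem_filter.mp hq
    obtain ⟨hs, h1, h2, h3, h4⟩ := mem_QdQ.mp hq'
    simp only at hs h1 h2 h3 h4 hlt
    refine mem_filter.mpr ⟨mem_QdQ.mpr ?_, ?_⟩
    · simp only
      refine ⟨?_, by omega, by omega, by omega, by omega⟩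
      rw [Nat.sub_mul, Nat.mul_add]
      have : u2 * v1 ≤ u1 * v1 := Nat.mul_le_mul_right _ hlt.le
      omega
    · simp only; omega
  · rintro ⟨⟨u1, v1⟩, u2, v2⟩ hq
    obtain ⟨hq', hlt⟩ := mem_filter.mp hq
    obtain ⟨hs, h1, h2, h3, h4⟩ := mem_QdQ.mp hq'
    simp only at hs h1 h2 h3 h4 hlt
    refine mem_filter.mpr ⟨mem_QdQ.mpr ?_, ?_⟩
    · simp only
      refine ⟨?_, by omega, by omega, by omega, by omega⟩
      rw [Nat.add_mul, Nat.mul_sub]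
      have : u2 * v1 ≤ u2 * v2 := Nat.mul_le_mul_left _ hlt.le
      omega
    · simp only; omega
  · rintro ⟨⟨u1, v1⟩, u2, v2⟩ hq
    obtain ⟨hq', hlt⟩ := mem_filter.mp hq
    simp only at hlt
    have e1 : u1 - u2 + u2 = u1 := by omega
    have e2 : v1 + v2 - v1 = v2 := by omega
    simp [e1, e2]
  · rintro ⟨⟨u1, v1⟩, u2, v2⟩ hq
    obtain ⟨hq', hlt⟩ := mem_filter.mp hq
    simp only at hlt
    have e1 : u1 + u2 - u2 = u1 := by omega
    have e2 : v1 + (v2 - v1) = v2 := by omega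
    simp [e1, e2]
  · intro q _; rfl

lemma bij_V (n : ℕ) :
    ∑ q ∈ (QdQ n).filter (fun q => q.1.1 < q.2.1), q.1.2 =
    ∑ q ∈ (QdQ n).filter (fun q => q.1.2 < q.2.2), (q.2.2 - q.1.2) := by
  apply Finset.sum_nbij'
    (i := fun q => ((q.2.1 - q.1.1, q.2.2), (q.1.1, q.1.2 + q.2.2)))
    (j := fun q => ((q.2.1, q.2.2 - q.1.2), (q.1.1 + q.2.1, q.1.2)))
  · rintro ⟨⟨u1, v1⟩, u2, v2⟩ hq
    obtain ⟨hq', hlt⟩ := mem_filter.mp hq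
    obtain ⟨hs, h1, h2, h3, h4⟩ := mem_QdQ.mp hq'
    simp only at hs h1 h2 h3 h4 hlt
    refine mem_filter.mpr ⟨mem_QdQ.mpr ?_, ?_⟩
    · simp only
      refine ⟨?_, by omega, by omega, by omega, by omega⟩
      rw [Nat.sub_mul, Nat.mul_add]
      have : u1 * v2 ≤ u2 * v2 := Nat.mul_le_mul_right _ hlt.le
      omega
    · simp only; omega
  · rintro ⟨⟨u1, v1⟩, u2, v2⟩ hq
    obtain ⟨hq', hlt⟩ := mem_filter.mp hq
    obtain ⟨hs, h1, h2, h3, h4⟩ := mem_QdQ.mp hq'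
    simp only at hs h1 h2 h3 h4 hlt
    refine mem_filter.mpr ⟨mem_QdQ.mpr ?_, ?_⟩
    · simp only
      refine ⟨?_, by omega, by omega, by omega, by omega⟩
      rw [Nat.mul_sub, Nat.add_mul]
      have : u2 * v1 ≤ u2 * v2 := Nat.mul_le_mul_left _ hlt.le
      omega
    · simp only; omega
  · rintro ⟨⟨u1, v1⟩, u2, v2⟩ hq
    obtain ⟨hq', hlt⟩ := mem_filter.mp hq
    simp only at hlt
    have e1 : v1 + v2 - v2 = v1 := by omega
    have e2 : u2 - u1 + u1 = u2 := by omega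
    simp [e1, e2]
  · rintro ⟨⟨u1, v1⟩, u2, v2⟩ hq
    obtain ⟨hq', hlt⟩ := mem_filter.mp hq
    simp only at hlt
    have e1 : u1 + u2 - u2 = u1 := by omega
    have e2 : v2 - v1 + v1 = v2 := by omega
    simp [e1, e2]
  · rintro ⟨⟨u1, v1⟩, u2, v2⟩ hq
    simp only
    omega

lemma bij_swap (n : ℕ) :
    ∑ q ∈ (QdQ n).filter (fun q => q.1.2 < q.2.2), q.2.2 =
    ∑ q ∈ (QdQ n).filter (fun q => q.2.2 < q.1.2), q.1.2 := by
  apply Finset.sum_nbij' (i := fun q => (q.2, q.1)) (j := fun q => (q.2, q.1))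
  · rintro ⟨⟨u1, v1⟩, u2, v2⟩ hq
    obtain ⟨hq', hlt⟩ := mem_filter.mp hq
    obtain ⟨hs, h1, h2, h3, h4⟩ := mem_QdQ.mp hq'
    exact mem_filter.mpr ⟨mem_QdQ.mpr ⟨by simp only at hs ⊢; omega, h3, h4, h1, h2⟩, hlt⟩
  · rintro ⟨⟨u1, v1⟩, u2, v2⟩ hq
    obtain ⟨hq', hlt⟩ := mem_filter.mp hq
    obtain ⟨hs, h1, h2, h3, h4⟩ := mem_QdQ.mp hq'
    exact mem_filter.mpr ⟨mem_QdQ.mpr ⟨by simp only at hs ⊢; omega, h3, h4, h1, h2⟩, hlt⟩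
  · intro q _; rfl
  · intro q _; rfl
  · intro q _; rfl

lemma Ico_one_eq_erase (w : ℕ) : Finset.Ico 1 w = (range w).erase 0 := by
  ext x; simp [Finset.mem_Ico, Finset.mem_erase, Finset.mem_range]; omega

lemma Eu_eq (n : ℕ) :
    2 * (∑ q ∈ (QdQ n).filter (fun q => q.1.1 = q.2.1), q.1.2) +
      (∑ p ∈ QdA n, p.2 ^ 1) = ∑ p ∈ QdA n, p.2 ^ 2 := by
  have h1 : (∑ q ∈ (QdQ n).filter (fun q => q.1.1 = q.2.1), q.1.2) =
      ∑ x ∈ (QdA n).sigma (fun p => Finset.Ico 1 p.2), x.2 := by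
    apply Finset.sum_nbij'
      (i := fun q => ⟨(q.1.1, q.1.2 + q.2.2), q.1.2⟩)
      (j := fun x => ((x.1.1, x.2), (x.1.1, x.1.2 - x.2)))
    · rintro ⟨⟨u1, v1⟩, u2, v2⟩ hq
      obtain ⟨hq', heq⟩ := mem_filter.mp hq
      obtain ⟨hs, h1, h2, h3, h4⟩ := mem_QdQ.mp hq'
      simp only at hs h1 h2 h3 h4 heq
      subst heq
      refine Finset.mem_sigma.mpr ⟨mem_QdA.mpr ?_, ?_⟩
      · simp only
        refine ⟨?_, by omega, by omega⟩
        rw [Nat.mul_add]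
        omega
      · simp only [Finset.mem_Ico]; omega
    · rintro ⟨⟨u, w⟩, v1⟩ hx
      obtain ⟨hp, hv⟩ := Finset.mem_sigma.mp hx
      obtain ⟨hs, h1, h2⟩ := mem_QdA.mp hp
      simp only at hs h1 h2
      simp only [Finset.mem_Ico] at hv
      refine mem_filter.mpr ⟨mem_QdQ.mpr ?_, rfl⟩
      simp only
      refine ⟨?_, by omega, by omega, by omega, by omega⟩
      rw [Nat.mul_sub]
      have : u * v1 ≤ u * w := Nat.mul_le_mul_left _ (by omega)
      omega
    · rintro ⟨⟨u1, v1⟩, u2, v2⟩ hq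
      obtain ⟨hq', heq⟩ := mem_filter.mp hq
      simp only at heq
      have e2 : v1 + v2 - v1 = v2 := by omega
      simp [e2, heq]
    · rintro ⟨⟨u, w⟩, v1⟩ hx
      obtain ⟨hp, hv⟩ := Finset.mem_sigma.mp hx
      simp only [Finset.mem_Ico] at hv
      have e2 : v1 + (w - v1) = w := by omega
      simp [e2]
    · intro q _; rfl
  rw [h1, Finset.sum_sigma]
  have h2 : ∀ p : ℕ × ℕ, (∑ v ∈ Finset.Ico 1 p.2, v) * 2 = p.2 * (p.2 - 1) := by
    intro p
    rw [Ico_one_eq_erase, Finset.sum_erase (range p.2) rfl, Finset.sum_range_id_mul_two]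
  have h3 : 2 * (∑ p ∈ QdA n, ∑ v ∈ Finset.Ico 1 p.2, v) =
      ∑ p ∈ QdA n, p.2 * (p.2 - 1) := by
    rw [mul_comm, Finset.sum_mul]
    exact Finset.sum_congr rfl fun p _ => h2 p
  rw [h3, ← Finset.sum_add_distrib]
  apply Finset.sum_congr rfl
  intro p hp
  obtain ⟨_, _, h⟩ := mem_QdA.mp hp
  rcases p with ⟨u, w⟩
  simp only at h ⊢
  rcases w with _ | k
  · omega
  · simp [Nat.succ_sub_one]; ring

lemma Ev_eq (n : ℕ) :
    (∑ q ∈ (QdQ n).filter (fun q => q.1.2 = q.2.2), q.1.2) +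
      (∑ p ∈ QdA n, p.2 ^ 1) = n * ∑ p ∈ QdA n, p.2 ^ 0 := by
  have h1 : (∑ q ∈ (QdQ n).filter (fun q => q.1.2 = q.2.2), q.1.2) =
      ∑ x ∈ (QdA n).sigma (fun p => Finset.Ico 1 p.1), x.1.2 := by
    apply Finset.sum_nbij'
      (i := fun q => ⟨(q.1.1 + q.2.1, q.1.2), q.1.1⟩)
      (j := fun x => ((x.2, x.1.2), (x.1.1 - x.2, x.1.2)))
    · rintro ⟨⟨u1, v1⟩, u2, v2⟩ hq
      obtain ⟨hq', heq⟩ := mem_filter.mp hq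
      obtain ⟨hs, h1, h2, h3, h4⟩ := mem_QdQ.mp hq'
      simp only at hs h1 h2 h3 h4 heq
      subst heq
      refine Finset.mem_sigma.mpr ⟨mem_QdA.mpr ?_, ?_⟩
      · simp only
        refine ⟨?_, by omega, by omega⟩
        rw [Nat.add_mul]
        omega
      · simp only [Finset.mem_Ico]; omega
    · rintro ⟨⟨m, v⟩, u1⟩ hx
      obtain ⟨hp, hu⟩ := Finset.mem_sigma.mp hx
      obtain ⟨hs, h1, h2⟩ := mem_QdA.mp hp
      simp only at hs h1 h2
      simp only [Finset.mem_Ico] at hu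
      refine mem_filter.mpr ⟨mem_QdQ.mpr ?_, rfl⟩
      simp only
      refine ⟨?_, by omega, by omega, by omega, by omega⟩
      rw [Nat.sub_mul]
      have : u1 * v ≤ m * v := Nat.mul_le_mul_right _ (by omega)
      omega
    · rintro ⟨⟨u1, v1⟩, u2, v2⟩ hq
      obtain ⟨hq', heq⟩ := mem_filter.mp hq
      simp only at heq
      have e2 : u1 + u2 - u1 = u2 := by omega
      simp [e2, heq]
    · rintro ⟨⟨m, v⟩, u1⟩ hx
      obtain ⟨hp, hu⟩ := Finset.mem_sigma.mp hx
      simp only [Finset.mem_Ico] at hu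
      have e2 : u1 + (m - u1) = m := by omega
      simp [e2]
    · intro q _; rfl
  rw [h1, Finset.sum_sigma]
  have h2 : ∀ p ∈ QdA n, (∑ _u ∈ Finset.Ico 1 p.1, p.2) + p.2 ^ 1 = n * p.2 ^ 0 := by
    intro p hp
    obtain ⟨hs, h1, h2⟩ := mem_QdA.mp hp
    rw [Finset.sum_const, Nat.card_Ico, smul_eq_mul, pow_one, pow_zero, mul_one]
    rw [Nat.sub_mul, one_mul]
    have : p.2 ≤ p.1 * p.2 := Nat.le_mul_of_pos_left _ h1
    omega
  rw [← Finset.sum_add_distrib, Finset.mul_sum]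
  exact Finset.sum_congr rfl h2

lemma key (n : ℕ) :
    2 * (∑ q ∈ (QdQ n).filter (fun q => q.2.1 < q.1.1), q.1.2) +
      2 * (n * ∑ p ∈ QdA n, p.2 ^ 0) =
      (∑ p ∈ QdA n, p.2 ^ 2) + (∑ p ∈ QdA n, p.2 ^ 1) := by
  have hu := split_sum n (fun q => q.1.2) (fun q => (q.1.1, q.2.1))
  have hv := split_sum n (fun q => q.1.2) (fun q => (q.1.2, q.2.2))
  simp only at hu hv
  have hT := bij_T n
  have hVT : (∑ q ∈ (QdQ n).filter (fun q => q.1.1 < q.2.1), q.1.2) +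
      (∑ q ∈ (QdQ n).filter (fun q => q.1.2 < q.2.2), q.1.2) =
      ∑ q ∈ (QdQ n).filter (fun q => q.2.2 < q.1.2), q.1.2 := by
    rw [bij_V, ← Finset.sum_add_distrib, ← bij_swap n]
    apply Finset.sum_congr rfl
    intro q hq
    have := (mem_filter.mp hq).2
    omega
  have hEu := Eu_eq n
  have hEv := Ev_eq n
  omega

lemma coeff_qd (f : PowerSeries ℚ) (n : ℕ) :
    PowerSeries.coeff n (qd f) = (n : ℚ) * PowerSeries.coeff n f := by
  simp [qd, PowerSeries.coeff_mk]

lemma coeff_bracket1 (n : ℕ) :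
    PowerSeries.coeff n (bracket ![1]) = (msigma ![0] n : ℚ) := by
  simp only [bracket, PowerSeries.coeff_mk]
  rw [show (fun i : Fin 1 => ![1] i - 1) = ![0] from by funext i; fin_cases i; rfl]
  norm_num [Fin.prod_univ_one]

lemma coeff_bracket2 (n : ℕ) :
    PowerSeries.coeff n (bracket ![2]) = (msigma ![1] n : ℚ) := by
  simp only [bracket, PowerSeries.coeff_mk]
  rw [show (fun i : Fin 1 => ![2] i - 1) = ![1] from by funext i; fin_cases i; rfl]
  norm_num [Fin.prod_univ_one]

lemma coeff_bracket3 (n : ℕ) :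
    PowerSeries.coeff n (bracket ![3]) = (msigma ![2] n : ℚ) / 2 := by
  simp only [bracket, PowerSeries.coeff_mk]
  rw [show (fun i : Fin 1 => ![3] i - 1) = ![2] from by funext i; fin_cases i; rfl]
  norm_num [Fin.prod_univ_one, Nat.factorial]

lemma coeff_bracket21 (n : ℕ) :
    PowerSeries.coeff n (bracket ![2, 1]) = (msigma ![1, 0] n : ℚ) := by
  simp only [bracket, PowerSeries.coeff_mk]
  rw [show (fun i : Fin 2 => ![2, 1] i - 1) = ![1, 0] from by funext i; fin_cases i <;> rfl]
  norm_num [Fin.prod_univ_two, Nat.factorial]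

theorem qd_bracket_one :
    qd (bracket ![1]) = bracket ![3] + (1 / 2 : ℚ) • bracket ![2] - bracket ![2, 1] := by
  ext n
  rw [map_sub, map_add, PowerSeries.coeff_smul, coeff_qd, coeff_bracket1, coeff_bracket2,
    coeff_bracket3, coeff_bracket21]
  have h1 := msigma_one 0 n
  have h2 := msigma_one 1 n
  have h3 := msigma_one 2 n
  have h4 : msigma ![1, 0] n = ∑ q ∈ (QdQ n).filter (fun q => q.2.1 < q.1.1), q.1.2 := by
    rw [msigma_two]; simp
  have h0 : msigma ![0] n = ∑ p ∈ QdA n, (1 : ℕ) := by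
    rw [h1]; apply Finset.sum_congr rfl; intro p _; simp
  have hk := key n
  have hcast : ((2 * (∑ q ∈ (QdQ n).filter (fun q => q.2.1 < q.1.1), q.1.2) +
      2 * (n * ∑ p ∈ QdA n, p.2 ^ 0) : ℕ) : ℚ) =
      (((∑ p ∈ QdA n, p.2 ^ 2) + (∑ p ∈ QdA n, p.2 ^ 1) : ℕ) : ℚ) := by
    exact_mod_cast hk
  push_cast at hcast
  rw [h1, h2, h3, h4, smul_eq_mul]
  push_cast
  linarith
end

section
/- As formal power series in q, d[2] = [4] + 2[3] - (1/6)[2] - 4[3,1] and also d[2] = 2[4] + [3] + (1/6)[2] - 2[2,2] - 2[3,1]; consequently [4] = 2[2,2] - 2[3,1] + [3] - (1/3)[2]. -/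
open Finset

/-! Auxiliary development -/

/-- quadruples ((a,x),(b,y)) of positive naturals with a*x + b*y = n -/
def QF (n : ℕ) : Finset ((ℕ × ℕ) × (ℕ × ℕ)) :=
  (((Finset.range (n+1) ×ˢ Finset.range (n+1)) ×ˢ
    (Finset.range (n+1) ×ˢ Finset.range (n+1)))).filter
    (fun p => 0 < p.1.1 ∧ 0 < p.1.2 ∧ 0 < p.2.1 ∧ 0 < p.2.2 ∧
      p.1.1 * p.1.2 + p.2.1 * p.2.2 = n)

lemma mem_QF {n : ℕ} {p : (ℕ × ℕ) × (ℕ × ℕ)} :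
    p ∈ QF n ↔ 0 < p.1.1 ∧ 0 < p.1.2 ∧ 0 < p.2.1 ∧ 0 < p.2.2 ∧
      p.1.1 * p.1.2 + p.2.1 * p.2.2 = n := by
  constructor
  · intro h
    exact (Finset.mem_filter.mp h).2
  · rintro ⟨h1, h2, h3, h4, h5⟩
    refine Finset.mem_filter.mpr ⟨?_, h1, h2, h3, h4, h5⟩
    have hax : p.1.1 * p.1.2 ≤ n := by omega
    have hby : p.2.1 * p.2.2 ≤ n := by omega
    have l1 : p.1.1 ≤ n := le_trans (Nat.le_mul_of_pos_right _ h2) hax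
    have l2 : p.1.2 ≤ n := le_trans (Nat.le_mul_of_pos_left _ h1) hax
    have l3 : p.2.1 ≤ n := le_trans (Nat.le_mul_of_pos_right _ h4) hby
    have l4 : p.2.2 ≤ n := le_trans (Nat.le_mul_of_pos_left _ h3) hby
    simp only [Finset.mem_product, Finset.mem_range]
    omega

/-- trichotomy splitting of a sum -/
lemma sum_tri {α : Type*} (s : Finset α) (f g : α → ℕ) (w : α → ℚ) :
    ∑ p ∈ s, w p =
      (∑ p ∈ s.filter (fun p => g p < f p), w p) +
      (∑ p ∈ s.filter (fun p => f p < g p), w p) +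
      (∑ p ∈ s.filter (fun p => f p = g p), w p) := by
  have h1 := Finset.sum_filter_add_sum_filter_not s (fun p => g p < f p) w
  have h2 := Finset.sum_filter_add_sum_filter_not (s.filter (fun p => ¬ g p < f p))
    (fun p => f p < g p) w
  rw [Finset.filter_filter, Finset.filter_filter] at h2
  have e1 : s.filter (fun a => ¬ g a < f a ∧ f a < g a) = s.filter (fun p => f p < g p) := by
    apply Finset.filter_congr; intro p _
    constructor
    · intro h; exact h.2
    · intro h; exact ⟨by omega, h⟩
  have e2 : s.filter (fun a => ¬ g a < f a ∧ ¬ f a < g a) = s.filter (fun p => f p = g p) := by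
    apply Finset.filter_congr; intro p _
    constructor
    · intro h; omega
    · intro h; omega
  rw [e1, e2] at h2
  linarith

/-- swap bijection -/
lemma sum_swap_QF {n : ℕ} (c : (ℕ × ℕ) × (ℕ × ℕ) → Prop) [DecidablePred c]
    (w : (ℕ × ℕ) × (ℕ × ℕ) → ℚ) :
    ∑ p ∈ (QF n).filter c, w p =
      ∑ p ∈ (QF n).filter (fun p => c (p.2, p.1)), w (p.2, p.1) := by
  apply Finset.sum_nbij' (fun p => (p.2, p.1)) (fun p => (p.2, p.1))
  · intro p hp
    simp only [Finset.mem_filter, mem_QF] at hp ⊢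
    refine ⟨⟨hp.1.2.2.1, hp.1.2.2.2.1, hp.1.1, hp.1.2.1, ?_⟩, ?_⟩
    · omega
    · simpa using hp.2
  · intro p hp
    simp only [Finset.mem_filter, mem_QF] at hp ⊢
    refine ⟨⟨hp.1.2.2.1, hp.1.2.2.2.1, hp.1.1, hp.1.2.1, ?_⟩, ?_⟩
    · omega
    · simpa using hp.2
  · intro p _; rfl
  · intro p _; rfl
  · intro p _; rfl

/-- the conjugation bijection: sums over b < a of transformed weight equal sums
over x < y -/
lemma sum_phi_QF {n : ℕ} (w : (ℕ × ℕ) × (ℕ × ℕ) → ℚ) :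
    ∑ p ∈ (QF n).filter (fun p => p.2.1 < p.1.1),
        w ((p.1.1 - p.2.1, p.1.2), (p.2.1, p.2.2 + p.1.2)) =
      ∑ p ∈ (QF n).filter (fun p => p.1.2 < p.2.2), w p := by
  apply Finset.sum_nbij' (fun p => ((p.1.1 - p.2.1, p.1.2), (p.2.1, p.2.2 + p.1.2)))
    (fun p => ((p.1.1 + p.2.1, p.1.2), (p.2.1, p.2.2 - p.1.2)))
  · rintro ⟨⟨a, x⟩, b, y⟩ hp
    simp only [Finset.mem_filter, mem_QF] at hp ⊢
    obtain ⟨⟨h1, h2, h3, h4, h5⟩, h6⟩ := hp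
    obtain ⟨a', rfl⟩ : ∃ a', a = a' + b := ⟨a - b, by omega⟩
    constructor
    · refine ⟨by omega, h2, h3, by omega, ?_⟩
      rw [Nat.add_sub_cancel]
      rw [← h5]; ring
    · show x < y + x; omega
  · rintro ⟨⟨a, x⟩, b, y⟩ hp
    simp only [Finset.mem_filter, mem_QF] at hp ⊢
    obtain ⟨⟨h1, h2, h3, h4, h5⟩, h6⟩ := hp
    obtain ⟨y', rfl⟩ : ∃ y', y = y' + x := ⟨y - x, by omega⟩
    constructor
    · refine ⟨by omega, h2, h3, by omega, ?_⟩
      rw [Nat.add_sub_cancel]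
      rw [← h5]; ring
    · show b < a + b; omega
  · rintro ⟨⟨a, x⟩, b, y⟩ hp
    simp only [Finset.mem_filter, mem_QF] at hp
    obtain ⟨⟨h1, h2, h3, h4, h5⟩, h6⟩ := hp
    simp only [Prod.mk.injEq, and_true, true_and, eq_self_iff_true]
    omega
  · rintro ⟨⟨a, x⟩, b, y⟩ hp
    simp only [Finset.mem_filter, mem_QF] at hp
    obtain ⟨⟨h1, h2, h3, h4, h5⟩, h6⟩ := hp
    simp only [Prod.mk.injEq, and_true, true_and, eq_self_iff_true]
    omega
  · intro p _; rfl


/-! ### single divisor sums -/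

noncomputable def sig (k n : ℕ) : ℚ := ∑ uv ∈ n.divisorsAntidiagonal, (uv.2 : ℚ) ^ k

lemma sum_Ico_id (v : ℕ) : ∑ x ∈ Finset.Ico 1 v, (x : ℚ) = ((v:ℚ)^2 - v)/2 := by
  induction v with
  | zero => simp
  | succ v ih =>
    rcases Nat.eq_zero_or_pos v with rfl | hv
    · simp
    · rw [Finset.sum_Ico_succ_top (by omega), ih]
      push_cast
      ring

lemma sum_Ico_sq (v : ℕ) : ∑ x ∈ Finset.Ico 1 v, (x : ℚ)^2 = (2*(v:ℚ)^3 - 3*(v:ℚ)^2 + v)/6 := by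
  induction v with
  | zero => simp
  | succ v ih =>
    rcases Nat.eq_zero_or_pos v with rfl | hv
    · norm_num
    · rw [Finset.sum_Ico_succ_top (by omega), ih]
      push_cast
      ring

lemma sum_Ico_refl_sq (v : ℕ) :
    ∑ x ∈ Finset.Ico 1 v, ((v:ℚ) - (x:ℚ))^2 = ∑ x ∈ Finset.Ico 1 v, (x : ℚ)^2 := by
  apply Finset.sum_nbij' (fun x => v - x) (fun x => v - x)
  · intro x hx; simp only [Finset.mem_Ico] at hx ⊢; omega
  · intro x hx; simp only [Finset.mem_Ico] at hx ⊢; omega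
  · intro x hx; simp only [Finset.mem_Ico] at hx; omega
  · intro x hx; simp only [Finset.mem_Ico] at hx; omega
  · intro x hx
    simp only [Finset.mem_Ico] at hx
    rw [Nat.cast_sub (by omega)]

lemma sum_Ico_const (u : ℕ) (hu : 1 ≤ u) (c : ℚ) :
    ∑ _a ∈ Finset.Ico 1 u, c = ((u:ℚ) - 1) * c := by
  rw [Finset.sum_const, Nat.card_Ico, nsmul_eq_mul, Nat.cast_sub hu]
  norm_num

/-! ### sums over the two diagonal pieces -/

def E₁ (n : ℕ) : Finset ((ℕ × ℕ) × ℕ) :=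
  ((n.divisorsAntidiagonal) ×ˢ (Finset.range (n+1))).filter
    (fun q => 0 < q.2 ∧ q.2 < q.1.2)

def E₂ (n : ℕ) : Finset ((ℕ × ℕ) × ℕ) :=
  ((n.divisorsAntidiagonal) ×ˢ (Finset.range (n+1))).filter
    (fun q => 0 < q.2 ∧ q.2 < q.1.1)

lemma sum_E₁ {n : ℕ} (g : ℕ × ℕ → ℕ → ℚ) :
    ∑ q ∈ E₁ n, g q.1 q.2 =
      ∑ uv ∈ n.divisorsAntidiagonal, ∑ x ∈ Finset.Ico 1 uv.2, g uv x := by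
  rw [E₁, Finset.sum_filter, Finset.sum_product]
  refine Finset.sum_congr rfl ?_
  intro uv huv
  rw [← Finset.sum_filter]
  apply Finset.sum_congr ?_ (fun _ _ => rfl)
  obtain ⟨h1, h2⟩ := Nat.mem_divisorsAntidiagonal.mp huv
  have hv : uv.2 ≤ n := Nat.le_of_dvd (Nat.pos_of_ne_zero h2) ⟨uv.1, by rw [← h1]; ring⟩
  ext x
  simp only [Finset.mem_filter, Finset.mem_range, Finset.mem_Ico]
  omega

lemma sum_E₂ {n : ℕ} (g : ℕ × ℕ → ℕ → ℚ) :
    ∑ q ∈ E₂ n, g q.1 q.2 =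
      ∑ uv ∈ n.divisorsAntidiagonal, ∑ a ∈ Finset.Ico 1 uv.1, g uv a := by
  rw [E₂, Finset.sum_filter, Finset.sum_product]
  refine Finset.sum_congr rfl ?_
  intro uv huv
  rw [← Finset.sum_filter]
  apply Finset.sum_congr ?_ (fun _ _ => rfl)
  obtain ⟨h1, h2⟩ := Nat.mem_divisorsAntidiagonal.mp huv
  have hv : uv.1 ≤ n := Nat.le_of_dvd (Nat.pos_of_ne_zero h2) ⟨uv.2, h1.symm⟩
  ext x
  simp only [Finset.mem_filter, Finset.mem_range, Finset.mem_Ico]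
  omega

lemma sum_diag_a {n : ℕ} (w : (ℕ × ℕ) × (ℕ × ℕ) → ℚ) :
    ∑ p ∈ (QF n).filter (fun p => p.1.1 = p.2.1), w p =
      ∑ q ∈ E₁ n, w ((q.1.1, q.2), (q.1.1, q.1.2 - q.2)) := by
  apply Finset.sum_nbij' (fun p => ((p.1.1, p.1.2 + p.2.2), p.1.2))
    (fun q => ((q.1.1, q.2), (q.1.1, q.1.2 - q.2)))
  · rintro ⟨⟨a, x⟩, b, y⟩ hp
    simp only [Finset.mem_filter, mem_QF, E₁, Finset.mem_product, Finset.mem_range,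
      Nat.mem_divisorsAntidiagonal] at hp ⊢
    obtain ⟨⟨h1, h2, h3, h4, h5⟩, h6⟩ := hp
    subst h6
    have hmul : a * (x + y) = n := by rw [← h5]; ring
    have hn : 0 < n := by rw [← hmul]; positivity
    have hxy : x + y ≤ n := Nat.le_of_dvd hn ⟨a, by rw [← hmul]; ring⟩
    exact ⟨⟨⟨hmul, by omega⟩, by omega⟩, by omega⟩
  · rintro ⟨⟨u, v⟩, x⟩ hq
    simp only [Finset.mem_filter, mem_QF, E₁, Finset.mem_product, Finset.mem_range,
      Nat.mem_divisorsAntidiagonal] at hq ⊢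
    obtain ⟨⟨⟨h1, h2⟩, h3⟩, h4, h5⟩ := hq
    have hu : 0 < u := by
      rcases Nat.eq_zero_or_pos u with rfl | h
      · simp at h1; omega
      · exact h
    obtain ⟨d, rfl⟩ : ∃ d, v = x + d := ⟨v - x, by omega⟩
    refine ⟨⟨hu, h4, hu, ?_, ?_⟩, trivial⟩
    · omega
    · simp only [Nat.add_sub_cancel_left]
      rw [← h1]; ring
  · rintro ⟨⟨a, x⟩, b, y⟩ hp
    simp only [Finset.mem_filter, mem_QF] at hp
    simp only [Prod.mk.injEq, and_true, true_and, eq_self_iff_true]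
    omega
  · rintro ⟨⟨u, v⟩, x⟩ hq
    simp only [E₁, Finset.mem_filter, Finset.mem_product, Finset.mem_range,
      Nat.mem_divisorsAntidiagonal] at hq
    simp only [Prod.mk.injEq, and_true, true_and, eq_self_iff_true]
    omega
  · rintro ⟨⟨a, x⟩, b, y⟩ hp
    simp only [Finset.mem_filter, mem_QF] at hp
    have e : (((a, x), (a, x + y - x)) : (ℕ × ℕ) × (ℕ × ℕ)) = ((a, x), (b, y)) := by
      simp only [Prod.mk.injEq, and_true, true_and, eq_self_iff_true]
      omega
    show w ((a, x), (b, y)) = w ((a, x), (a, x + y - x))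
    rw [e]

lemma sum_diag_x {n : ℕ} (w : (ℕ × ℕ) × (ℕ × ℕ) → ℚ) :
    ∑ p ∈ (QF n).filter (fun p => p.1.2 = p.2.2), w p =
      ∑ q ∈ E₂ n, w ((q.2, q.1.2), (q.1.1 - q.2, q.1.2)) := by
  apply Finset.sum_nbij' (fun p => ((p.1.1 + p.2.1, p.1.2), p.1.1))
    (fun q => ((q.2, q.1.2), (q.1.1 - q.2, q.1.2)))
  · rintro ⟨⟨a, x⟩, b, y⟩ hp
    simp only [Finset.mem_filter, mem_QF, E₂, Finset.mem_product, Finset.mem_range,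
      Nat.mem_divisorsAntidiagonal] at hp ⊢
    obtain ⟨⟨h1, h2, h3, h4, h5⟩, h6⟩ := hp
    subst h6
    have hmul : (a + b) * x = n := by rw [← h5]; ring
    have hn : 0 < n := by rw [← hmul]; positivity
    have hab : a + b ≤ n := Nat.le_of_dvd hn ⟨x, hmul.symm⟩
    exact ⟨⟨⟨hmul, by omega⟩, by omega⟩, by omega⟩
  · rintro ⟨⟨u, v⟩, a⟩ hq
    simp only [Finset.mem_filter, mem_QF, E₂, Finset.mem_product, Finset.mem_range,
      Nat.mem_divisorsAntidiagonal] at hq ⊢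
    obtain ⟨⟨⟨h1, h2⟩, h3⟩, h4, h5⟩ := hq
    have hv : 0 < v := by
      rcases Nat.eq_zero_or_pos v with rfl | h
      · simp at h1; omega
      · exact h
    obtain ⟨d, rfl⟩ : ∃ d, u = a + d := ⟨u - a, by omega⟩
    refine ⟨⟨h4, hv, ?_, hv, ?_⟩, trivial⟩
    · omega
    · simp only [Nat.add_sub_cancel_left]
      rw [← h1]; ring
  · rintro ⟨⟨a, x⟩, b, y⟩ hp
    simp only [Finset.mem_filter, mem_QF] at hp
    simp only [Prod.mk.injEq, and_true, true_and, eq_self_iff_true]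
    omega
  · rintro ⟨⟨u, v⟩, a⟩ hq
    simp only [E₂, Finset.mem_filter, Finset.mem_product, Finset.mem_range,
      Nat.mem_divisorsAntidiagonal] at hq
    simp only [Prod.mk.injEq, and_true, true_and, eq_self_iff_true]
    omega
  · rintro ⟨⟨a, x⟩, b, y⟩ hp
    simp only [Finset.mem_filter, mem_QF] at hp
    have e : (((a, x), (a + b - a, x)) : (ℕ × ℕ) × (ℕ × ℕ)) = ((a, x), (b, y)) := by
      simp only [Prod.mk.injEq, and_true, true_and, eq_self_iff_true]
      omega
    show w ((a, x), (b, y)) = w ((a, x), (a + b - a, x))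
    rw [e]

/-! ### evaluated diagonal sums -/

lemma inner_xy (v : ℕ) :
    ∑ x ∈ Finset.Ico 1 v, (x : ℚ) * ((v - x : ℕ) : ℚ) = ((v:ℚ)^3 - v)/6 := by
  have h : ∀ x ∈ Finset.Ico 1 v, (x : ℚ) * ((v - x : ℕ) : ℚ) = (v:ℚ) * x - (x:ℚ)^2 := by
    intro x hx
    simp only [Finset.mem_Ico] at hx
    rw [Nat.cast_sub (by omega)]
    ring
  rw [Finset.sum_congr rfl h, Finset.sum_sub_distrib, ← Finset.mul_sum, sum_Ico_id, sum_Ico_sq]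
  ring

lemma inner_y2 (v : ℕ) :
    ∑ x ∈ Finset.Ico 1 v, (((v - x : ℕ)) : ℚ)^2 = (2*(v:ℚ)^3 - 3*(v:ℚ)^2 + v)/6 := by
  have h : ∀ x ∈ Finset.Ico 1 v, (((v - x : ℕ)) : ℚ)^2 = ((v:ℚ) - (x:ℚ))^2 := by
    intro x hx
    simp only [Finset.mem_Ico] at hx
    rw [Nat.cast_sub (by omega)]
  rw [Finset.sum_congr rfl h, sum_Ico_refl_sq, sum_Ico_sq]

lemma d_ab_xy (n : ℕ) :
    ∑ p ∈ (QF n).filter (fun p => p.1.1 = p.2.1), (p.1.2 : ℚ) * (p.2.2 : ℚ) =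
      (sig 3 n - sig 1 n)/6 := by
  rw [sum_diag_a (fun p => (p.1.2 : ℚ) * (p.2.2 : ℚ))]
  rw [sum_E₁ (fun uv x => (x : ℚ) * ((uv.2 - x : ℕ) : ℚ))]
  rw [Finset.sum_congr rfl (fun uv _ => inner_xy uv.2)]
  rw [sig, sig, ← Finset.sum_sub_distrib, ← Finset.sum_div]
  congr 1
  apply Finset.sum_congr rfl
  intro uv _
  rw [pow_one]

lemma d_ab_y2 (n : ℕ) :
    ∑ p ∈ (QF n).filter (fun p => p.1.1 = p.2.1), (p.2.2 : ℚ)^2 =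
      (2*sig 3 n - 3*sig 2 n + sig 1 n)/6 := by
  rw [sum_diag_a (fun p => (p.2.2 : ℚ)^2)]
  rw [sum_E₁ (fun uv x => ((uv.2 - x : ℕ) : ℚ)^2)]
  rw [Finset.sum_congr rfl (fun uv _ => inner_y2 uv.2)]
  rw [sig, sig, sig, Finset.mul_sum, Finset.mul_sum, ← Finset.sum_sub_distrib,
    ← Finset.sum_add_distrib, ← Finset.sum_div]
  congr 1
  apply Finset.sum_congr rfl
  intro uv _
  rw [pow_one]

lemma sum_nv (n : ℕ) :
    ∑ uv ∈ n.divisorsAntidiagonal, (uv.1 : ℚ) * (uv.2 : ℚ)^2 = (n:ℚ) * sig 1 n := by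
  rw [sig, Finset.mul_sum]
  apply Finset.sum_congr rfl
  intro uv huv
  obtain ⟨h1, _⟩ := Nat.mem_divisorsAntidiagonal.mp huv
  have : ((uv.1 * uv.2 : ℕ) : ℚ) = (n : ℚ) := by rw [h1]
  push_cast at this
  rw [pow_one]
  nlinarith [this]

lemma d_xy_eval (n : ℕ) (w : (ℕ × ℕ) × (ℕ × ℕ) → ℚ)
    (hw : ∀ q : (ℕ × ℕ) × ℕ, w ((q.2, q.1.2), (q.1.1 - q.2, q.1.2)) = (q.1.2 : ℚ)^2) :
    ∑ p ∈ (QF n).filter (fun p => p.1.2 = p.2.2), w p = (n:ℚ) * sig 1 n - sig 2 n := by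
  rw [sum_diag_x w]
  rw [Finset.sum_congr rfl (fun q _ => hw q)]
  rw [sum_E₂ (fun uv _ => (uv.2 : ℚ)^2)]
  have h : ∀ uv ∈ n.divisorsAntidiagonal,
      (∑ _a ∈ Finset.Ico 1 uv.1, (uv.2 : ℚ)^2) = ((uv.1:ℚ) - 1) * (uv.2:ℚ)^2 := by
    intro uv huv
    obtain ⟨h1, h2⟩ := Nat.mem_divisorsAntidiagonal.mp huv
    have hu : 1 ≤ uv.1 := by
      rcases Nat.eq_zero_or_pos uv.1 with h | h
      · rw [h] at h1; simp at h1; omega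
      · exact h
    exact sum_Ico_const uv.1 hu _
  rw [Finset.sum_congr rfl h]
  have expand : ∀ uv : ℕ × ℕ, ((uv.1:ℚ) - 1) * (uv.2:ℚ)^2
      = (uv.1 : ℚ) * (uv.2 : ℚ)^2 - (uv.2:ℚ)^2 := by intro uv; ring
  rw [Finset.sum_congr rfl (fun uv _ => expand uv), Finset.sum_sub_distrib, sum_nv, sig]
  rfl

/-! ### swap corollaries -/

lemma swap_ab_xy (n : ℕ) :
    ∑ p ∈ (QF n).filter (fun p => p.1.1 < p.2.1), (p.1.2:ℚ)*(p.2.2:ℚ) =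
      ∑ p ∈ (QF n).filter (fun p => p.2.1 < p.1.1), (p.1.2:ℚ)*(p.2.2:ℚ) := by
  have h := sum_swap_QF (n := n) (fun p => p.1.1 < p.2.1)
    (fun p => (p.1.2:ℚ)*(p.2.2:ℚ))
  simp only at h
  rw [h]
  apply Finset.sum_congr rfl
  intro p _
  ring

lemma swap_ab_y2 (n : ℕ) :
    ∑ p ∈ (QF n).filter (fun p => p.1.1 < p.2.1), (p.2.2:ℚ)^2 =
      ∑ p ∈ (QF n).filter (fun p => p.2.1 < p.1.1), (p.1.2:ℚ)^2 := by
  have h := sum_swap_QF (n := n) (fun p => p.1.1 < p.2.1)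
    (fun p => (p.2.2:ℚ)^2)
  simp only at h
  rw [h]

lemma swap_xy_xy (n : ℕ) :
    ∑ p ∈ (QF n).filter (fun p => p.2.2 < p.1.2), (p.1.2:ℚ)*(p.2.2:ℚ) =
      ∑ p ∈ (QF n).filter (fun p => p.1.2 < p.2.2), (p.1.2:ℚ)*(p.2.2:ℚ) := by
  have h := sum_swap_QF (n := n) (fun p => p.2.2 < p.1.2)
    (fun p => (p.1.2:ℚ)*(p.2.2:ℚ))
  simp only at h
  rw [h]
  apply Finset.sum_congr rfl
  intro p _
  ring

lemma swap_xy_y2 (n : ℕ) :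
    ∑ p ∈ (QF n).filter (fun p => p.2.2 < p.1.2), (p.2.2:ℚ)^2 =
      ∑ p ∈ (QF n).filter (fun p => p.1.2 < p.2.2), (p.1.2:ℚ)^2 := by
  have h := sum_swap_QF (n := n) (fun p => p.2.2 < p.1.2)
    (fun p => (p.2.2:ℚ)^2)
  simp only at h
  rw [h]

/-! ### conjugation corollaries -/

lemma phi_xy (n : ℕ) :
    ∑ p ∈ (QF n).filter (fun p => p.1.2 < p.2.2), (p.1.2:ℚ)*(p.2.2:ℚ) =
      (∑ p ∈ (QF n).filter (fun p => p.2.1 < p.1.1), (p.1.2:ℚ)*(p.2.2:ℚ)) +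
      ∑ p ∈ (QF n).filter (fun p => p.2.1 < p.1.1), (p.1.2:ℚ)^2 := by
  have h := sum_phi_QF (n := n) (fun p => (p.1.2:ℚ)*(p.2.2:ℚ))
  simp only at h
  rw [← h, ← Finset.sum_add_distrib]
  apply Finset.sum_congr rfl
  intro p _
  push_cast
  ring

lemma phi_y2 (n : ℕ) :
    ∑ p ∈ (QF n).filter (fun p => p.1.2 < p.2.2), (p.2.2:ℚ)^2 =
      (∑ p ∈ (QF n).filter (fun p => p.2.1 < p.1.1), (p.2.2:ℚ)^2) +
      2 * (∑ p ∈ (QF n).filter (fun p => p.2.1 < p.1.1), (p.1.2:ℚ)*(p.2.2:ℚ)) +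
      ∑ p ∈ (QF n).filter (fun p => p.2.1 < p.1.1), (p.1.2:ℚ)^2 := by
  have h := sum_phi_QF (n := n) (fun p => (p.2.2:ℚ)^2)
  simp only at h
  rw [← h, Finset.mul_sum, ← Finset.sum_add_distrib, ← Finset.sum_add_distrib]
  apply Finset.sum_congr rfl
  intro p _
  push_cast
  ring

lemma phi_x2 (n : ℕ) :
    ∑ p ∈ (QF n).filter (fun p => p.1.2 < p.2.2), (p.1.2:ℚ)^2 =
      ∑ p ∈ (QF n).filter (fun p => p.2.1 < p.1.1), (p.1.2:ℚ)^2 := by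
  have h := sum_phi_QF (n := n) (fun p => (p.1.2:ℚ)^2)
  simp only at h
  rw [← h]

/-! ### the two key identities -/

lemma key1 (n : ℕ) :
    (sig 3 n - sig 1 n)/6 =
      2 * (∑ p ∈ (QF n).filter (fun p => p.2.1 < p.1.1), (p.1.2:ℚ)^2) +
        ((n:ℚ) * sig 1 n - sig 2 n) := by
  have h1 := sum_tri (QF n) (fun p => p.1.1) (fun p => p.2.1)
    (fun p => (p.1.2:ℚ)*(p.2.2:ℚ))
  have h2 := sum_tri (QF n) (fun p => p.1.2) (fun p => p.2.2)
    (fun p => (p.1.2:ℚ)*(p.2.2:ℚ))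
  have hd1 := d_ab_xy n
  have hd2 := d_xy_eval n (fun p => (p.1.2:ℚ)*(p.2.2:ℚ)) (fun q => by rw [pow_two])
  have e1 := swap_ab_xy n
  have e2 := swap_xy_xy n
  have e3 := phi_xy n
  linarith [h1, h2]

lemma key2 (n : ℕ) :
    (2*sig 3 n - 3*sig 2 n + sig 1 n)/6 =
      2 * (∑ p ∈ (QF n).filter (fun p => p.2.1 < p.1.1), (p.1.2:ℚ)*(p.2.2:ℚ)) +
      (∑ p ∈ (QF n).filter (fun p => p.2.1 < p.1.1), (p.1.2:ℚ)^2) +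
        ((n:ℚ) * sig 1 n - sig 2 n) := by
  have h1 := sum_tri (QF n) (fun p => p.1.1) (fun p => p.2.1)
    (fun p => (p.2.2:ℚ)^2)
  have h2 := sum_tri (QF n) (fun p => p.1.2) (fun p => p.2.2)
    (fun p => (p.2.2:ℚ)^2)
  have hd1 := d_ab_y2 n
  have hd2 := d_xy_eval n (fun p => (p.2.2:ℚ)^2) (fun q => by rfl)
  have e1 := swap_ab_y2 n
  have e2 := swap_xy_y2 n
  have e3 := phi_y2 n
  have e4 := phi_x2 n
  linarith [h1, h2]

/-! ### msigma in terms of our sums -/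

lemma msigma_one_s13 (r : Fin 1 → ℕ) (n : ℕ) :
    msigma r n = ∑ uv ∈ n.divisorsAntidiagonal, uv.2 ^ (r 0) := by
  rw [msigma]
  apply Finset.sum_nbij' (fun f => f 0) (fun p => fun _ => p)
  · intro f hf
    simp only [Finset.mem_filter, Fintype.mem_piFinset, Finset.mem_product,
      Finset.mem_range, Fin.sum_univ_one] at hf
    obtain ⟨_, h1, h2, h3, _⟩ := hf
    rw [Nat.mem_divisorsAntidiagonal]
    constructor
    · exact h1
    · have := Nat.mul_pos (h2 0) (h3 0)
      omega
  · intro p hp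
    rw [Nat.mem_divisorsAntidiagonal] at hp
    obtain ⟨h1, h2⟩ := hp
    have hu : 0 < p.1 := by
      rcases Nat.eq_zero_or_pos p.1 with h | h
      · rw [h] at h1; simp at h1; omega
      · exact h
    have hv : 0 < p.2 := by
      rcases Nat.eq_zero_or_pos p.2 with h | h
      · rw [h] at h1; simp at h1; omega
      · exact h
    have hun : p.1 ≤ n := Nat.le_of_dvd (Nat.pos_of_ne_zero h2) ⟨p.2, h1.symm⟩
    have hvn : p.2 ≤ n := Nat.le_of_dvd (Nat.pos_of_ne_zero h2) ⟨p.1, by rw [← h1]; ring⟩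
    simp only [Finset.mem_filter, Fintype.mem_piFinset, Finset.mem_product,
      Finset.mem_range, Fin.sum_univ_one]
    refine ⟨fun _ => ⟨by omega, by omega⟩, h1, fun _ => hu, fun _ => hv, ?_⟩
    intro i j hij
    rw [Subsingleton.elim i j] at hij
    exact absurd hij (lt_irrefl j)
  · intro f _
    funext i
    rw [Subsingleton.elim i 0]
  · intro p _
    rfl
  · intro f _
    rw [Fin.prod_univ_one]

lemma msigma_two_s13 (r : Fin 2 → ℕ) (n : ℕ) :
    msigma r n = ∑ p ∈ (QF n).filter (fun p => p.2.1 < p.1.1),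
      p.1.2 ^ (r 0) * p.2.2 ^ (r 1) := by
  rw [msigma]
  apply Finset.sum_nbij' (fun f => (f 0, f 1)) (fun p => ![p.1, p.2])
  · intro f hf
    simp only [Finset.mem_filter, Fintype.mem_piFinset, Finset.mem_product,
      Finset.mem_range, Fin.sum_univ_two] at hf
    obtain ⟨_, h1, h2, h3, h4⟩ := hf
    simp only [Finset.mem_filter, mem_QF]
    exact ⟨⟨h2 0, h3 0, h2 1, h3 1, h1⟩, h4 0 1 (by decide)⟩
  · intro p hp
    simp only [Finset.mem_filter, mem_QF] at hp
    obtain ⟨⟨h1, h2, h3, h4, h5⟩, h6⟩ := hp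
    have b1 : p.1.1 ≤ n := by nlinarith
    have b2 : p.1.2 ≤ n := by nlinarith
    have b3 : p.2.1 ≤ n := by nlinarith
    have b4 : p.2.2 ≤ n := by nlinarith
    simp only [Finset.mem_filter, Fintype.mem_piFinset, Finset.mem_product,
      Finset.mem_range, Fin.sum_univ_two]
    refine ⟨?_, ?_, ?_, ?_, ?_⟩
    · intro i
      fin_cases i <;> simp <;> omega
    · simpa using h5
    · intro i
      fin_cases i <;> simpa using (by assumption)
    · intro i
      fin_cases i <;> simpa using (by assumption)
    · intro i j hij
      fin_cases i <;> fin_cases j <;> simp_all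
  · intro f _
    funext i
    fin_cases i <;> simp
  · intro p _
    simp
  · intro f _
    rw [Fin.prod_univ_two]

/-! ### cast versions -/

lemma msigma_one_q (r : Fin 1 → ℕ) (n : ℕ) :
    ((msigma r n : ℕ) : ℚ) = sig (r 0) n := by
  rw [msigma_one_s13, sig]
  push_cast
  rfl

lemma msigma_two_q (r : Fin 2 → ℕ) (n : ℕ) :
    ((msigma r n : ℕ) : ℚ) = ∑ p ∈ (QF n).filter (fun p => p.2.1 < p.1.1),
      (p.1.2:ℚ) ^ (r 0) * (p.2.2:ℚ) ^ (r 1) := by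
  rw [msigma_two_s13]
  push_cast
  rfl

/-! ### bracket coefficients -/

lemma coeff_b2 (n : ℕ) : PowerSeries.coeff n (bracket ![2]) = sig 1 n := by
  rw [bracket, PowerSeries.coeff_mk, msigma_one_q]
  norm_num

lemma coeff_b3 (n : ℕ) : PowerSeries.coeff n (bracket ![3]) = sig 2 n / 2 := by
  rw [bracket, PowerSeries.coeff_mk, msigma_one_q]
  norm_num

lemma coeff_b4 (n : ℕ) : PowerSeries.coeff n (bracket ![4]) = sig 3 n / 6 := by
  rw [bracket, PowerSeries.coeff_mk, msigma_one_q]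
  norm_num

lemma coeff_b22 (n : ℕ) : PowerSeries.coeff n (bracket ![2, 2]) =
    ∑ p ∈ (QF n).filter (fun p => p.2.1 < p.1.1), (p.1.2:ℚ) * (p.2.2:ℚ) := by
  rw [bracket, PowerSeries.coeff_mk, msigma_two_q]
  norm_num

lemma coeff_b31 (n : ℕ) : PowerSeries.coeff n (bracket ![3, 1]) =
    (∑ p ∈ (QF n).filter (fun p => p.2.1 < p.1.1), (p.1.2:ℚ)^2) / 2 := by
  rw [bracket, PowerSeries.coeff_mk, msigma_two_q]
  norm_num

lemma coeff_qd2 (n : ℕ) : PowerSeries.coeff n (qd (bracket ![2])) = (n:ℚ) * sig 1 n := by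
  rw [qd, PowerSeries.coeff_mk, coeff_b2]

theorem qd_bracket_two :
    (qd (bracket ![2]) =
        bracket ![4] + 2 * bracket ![3] - (1 / 6 : ℚ) • bracket ![2] - 4 * bracket ![3, 1]) ∧
      (qd (bracket ![2]) =
        2 * bracket ![4] + bracket ![3] + (1 / 6 : ℚ) • bracket ![2] -
          2 * bracket ![2, 2] - 2 * bracket ![3, 1]) ∧
      bracket ![4] =
        2 * bracket ![2, 2] - 2 * bracket ![3, 1] + bracket ![3] -
          (1 / 3 : ℚ) • bracket ![2] := by
  have e2 : ∀ f : PowerSeries ℚ, (2:PowerSeries ℚ) * f = f + f := fun f => by ring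
  have e4 : ∀ f : PowerSeries ℚ, (4:PowerSeries ℚ) * f = f + f + f + f := fun f => by ring
  refine ⟨?_, ?_, ?_⟩
  · ext n
    simp only [e2, e4, map_add, map_sub, PowerSeries.coeff_smul, smul_eq_mul,
      coeff_qd2, coeff_b2, coeff_b3, coeff_b4, coeff_b22, coeff_b31]
    linarith [key1 n, key2 n]
  · ext n
    simp only [e2, e4, map_add, map_sub, PowerSeries.coeff_smul, smul_eq_mul,
      coeff_qd2, coeff_b2, coeff_b3, coeff_b4, coeff_b22, coeff_b31]
    linarith [key1 n, key2 n]
  · ext n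
    simp only [e2, e4, map_add, map_sub, PowerSeries.coeff_smul, smul_eq_mul,
      coeff_qd2, coeff_b2, coeff_b3, coeff_b4, coeff_b22, coeff_b31]
    linarith [key1 n, key2 n]
end
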